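/- arXiv:1505.00290 — 2 statements merged into one kernel-verified Lean document; each statement's English description precedes it below -/
import Mathlib

section
/- Let (G, v₀) be a partially-labeled finite connected weighted graph with terminal set T, α ≥ 0, and U ⊆ T. There exists an assignment v : V → ℝ with {t ∈ T : v(t) ≠ v₀(t)} ⊆ U and max over edges (x,y) of |v(x) − v(y)|/ℓ(x,y) ≤ α, if and only if U is a vertex cover of the α-pressure terminal graph G_α (edges taken as undirected). -/
/-- Total length of a walk in a graph with edge lengths `ℓ`. -/
noncomputable def walkLen {V : Type*} (ℓ : Sym2 V → ℝ) {G : SimpleGraph V} {u v : V}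
    (p : G.Walk u v) : ℝ :=
  (p.darts.map fun d => ℓ d.edge).sum

/-- Shortest-path distance induced by edge lengths `ℓ`. -/
noncomputable def gdist {V : Type*} (G : SimpleGraph V) (ℓ : Sym2 V → ℝ) (u v : V) : ℝ :=
  sInf {x | ∃ p : G.Walk u v, walkLen ℓ p = x}

/-- Absolute gradient `|v x - v y| / ℓ(x,y)` of `v` on the unordered pair `e`. -/
noncomputable def absGrad {V : Type*} (ℓ : Sym2 V → ℝ) (v : V → ℝ) (e : Sym2 V) : ℝ :=
  Sym2.lift ⟨fun x y => |v x - v y|, fun x y => abs_sub_comm (v x) (v y)⟩ e / ℓ e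

/-- The absolute edge gradients of `v`, sorted in decreasing order. -/
noncomputable def gradList {V : Type*} [Fintype V] [DecidableEq V] (G : SimpleGraph V)
    [DecidableRel G.Adj] (ℓ : Sym2 V → ℝ) (v : V → ℝ) : List ℝ :=
  (G.edgeFinset.val.map (absGrad ℓ v)).sort (· ≥ ·)

section helper
variable {V : Type*} {G : SimpleGraph V} (ℓ : Sym2 V → ℝ)

lemma walkLen_nil {u : V} : walkLen ℓ (SimpleGraph.Walk.nil : G.Walk u u) = 0 := by
  simp [walkLen]

lemma walkLen_cons {u v w : V} (h : G.Adj u v) (p : G.Walk v w) :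
    walkLen ℓ (SimpleGraph.Walk.cons h p) = ℓ s(u, v) + walkLen ℓ p := by
  simp [walkLen, SimpleGraph.Walk.darts_cons]

lemma walkLen_append {u v w : V} (p : G.Walk u v) (q : G.Walk v w) :
    walkLen ℓ (p.append q) = walkLen ℓ p + walkLen ℓ q := by
  simp [walkLen]

lemma walkLen_reverse {u v : V} (p : G.Walk u v) :
    walkLen ℓ p.reverse = walkLen ℓ p := by
  simp [walkLen, SimpleGraph.Dart.edge_symm, List.map_map, Function.comp_def,
    List.sum_reverse]

variable (hℓ : ∀ e ∈ G.edgeSet, 0 < ℓ e)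
include hℓ

lemma walkLen_nonneg {u v : V} (p : G.Walk u v) : 0 ≤ walkLen ℓ p := by
  apply List.sum_nonneg
  intro x hx
  obtain ⟨d, hd, rfl⟩ := List.mem_map.mp hx
  exact (hℓ _ d.edge_mem).le

lemma gdist_bddBelow (u v : V) : BddBelow {x | ∃ p : G.Walk u v, walkLen ℓ p = x} :=
  ⟨0, fun x ⟨p, hp⟩ => hp ▸ walkLen_nonneg ℓ hℓ p⟩

lemma gdist_nonneg (u v : V) : 0 ≤ gdist G ℓ u v := by
  by_cases hne : {x | ∃ p : G.Walk u v, walkLen ℓ p = x}.Nonempty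
  · exact le_csInf hne (fun x ⟨p, hp⟩ => hp ▸ walkLen_nonneg ℓ hℓ p)
  · simp [gdist, Set.not_nonempty_iff_eq_empty.mp hne, Real.sInf_empty]

lemma gdist_self (u : V) : gdist G ℓ u u = 0 := by
  refine le_antisymm (csInf_le (gdist_bddBelow ℓ hℓ u u) ⟨.nil, walkLen_nil ℓ⟩)
    (gdist_nonneg ℓ hℓ u u)

lemma gdist_le_walkLen {u v : V} (p : G.Walk u v) : gdist G ℓ u v ≤ walkLen ℓ p :=
  csInf_le (gdist_bddBelow ℓ hℓ u v) ⟨p, rfl⟩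

lemma gdist_comm (hG : G.Connected) (u v : V) : gdist G ℓ u v = gdist G ℓ v u := by
  have key : ∀ a b : V, gdist G ℓ a b ≤ gdist G ℓ b a := by
    intro a b
    obtain ⟨q⟩ := hG.preconnected b a
    refine le_csInf ⟨_, q, rfl⟩ ?_
    rintro x ⟨p, rfl⟩
    calc gdist G ℓ a b ≤ walkLen ℓ p.reverse := gdist_le_walkLen ℓ hℓ _
    _ = walkLen ℓ p := walkLen_reverse ℓ p
  exact le_antisymm (key u v) (key v u)

lemma gdist_triangle (hG : G.Connected) (u v w : V) :
    gdist G ℓ u w ≤ gdist G ℓ u v + gdist G ℓ v w := by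
  obtain ⟨p0⟩ := hG.preconnected u v
  obtain ⟨q0⟩ := hG.preconnected v w
  have h1 : ∀ x ∈ {x | ∃ p : G.Walk u v, walkLen ℓ p = x},
      ∀ y ∈ {x | ∃ p : G.Walk v w, walkLen ℓ p = x}, gdist G ℓ u w ≤ x + y := by
    rintro x ⟨p, rfl⟩ y ⟨q, rfl⟩
    calc gdist G ℓ u w ≤ walkLen ℓ (p.append q) := gdist_le_walkLen ℓ hℓ _
    _ = _ := walkLen_append ℓ p q
  have h2 : ∀ y ∈ {x | ∃ p : G.Walk v w, walkLen ℓ p = x},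
      gdist G ℓ u w - y ≤ gdist G ℓ u v := by
    intro y hy
    refine le_csInf ⟨_, p0, rfl⟩ (fun x hx => ?_)
    linarith [h1 x hx y hy]
  have h3 : gdist G ℓ u w - gdist G ℓ u v ≤ gdist G ℓ v w := by
    refine le_csInf ⟨_, q0, rfl⟩ (fun y hy => ?_)
    linarith [h2 y hy]
  linarith

lemma gdist_le_edge {u v : V} (h : G.Adj u v) : gdist G ℓ u v ≤ ℓ s(u, v) := by
  calc gdist G ℓ u v ≤ walkLen ℓ (SimpleGraph.Walk.cons h .nil) := gdist_le_walkLen ℓ hℓ _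
  _ = ℓ s(u, v) := by rw [walkLen_cons, walkLen_nil, add_zero]

lemma gdist_pos [Fintype V] (hG : G.Connected) {u v : V} (huv : u ≠ v) :
    0 < gdist G ℓ u v := by
  classical
  obtain ⟨p0⟩ := hG.preconnected u v
  have hne : (G.edgeFinset.image ℓ).Nonempty := by
    cases p0 with
    | nil => exact absurd rfl huv
    | @cons _ w _ h p => exact ⟨ℓ s(u, w), Finset.mem_image_of_mem ℓ
        (SimpleGraph.mem_edgeFinset.mpr h)⟩
  set ε := (G.edgeFinset.image ℓ).min' hne with hε
  have hεpos : 0 < ε := by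
    obtain ⟨e, he, heq⟩ := Finset.mem_image.mp ((G.edgeFinset.image ℓ).min'_mem hne)
    rw [hε, ← heq]; exact hℓ e (SimpleGraph.mem_edgeFinset.mp he)
  have key : ∀ w : V, w ≠ v → ∀ p : G.Walk w v, ε ≤ walkLen ℓ p := by
    intro w hw p
    cases p with
    | nil => exact absurd rfl hw
    | @cons _ x _ h q =>
      rw [walkLen_cons]
      have h1 : ε ≤ ℓ s(w, x) := Finset.min'_le _ _
        (Finset.mem_image_of_mem ℓ (SimpleGraph.mem_edgeFinset.mpr h))
      linarith [walkLen_nonneg ℓ hℓ q]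
  calc (0:ℝ) < ε := hεpos
  _ ≤ gdist G ℓ u v := le_csInf ⟨_, p0, rfl⟩ (by rintro x ⟨p, rfl⟩; exact key u huv p)

end helper

section main
variable {V : Type*} {G : SimpleGraph V} {ℓ : Sym2 V → ℝ}

lemma absGrad_eval (ℓ : Sym2 V → ℝ) (v : V → ℝ) (x y : V) :
    absGrad ℓ v s(x, y) = |v x - v y| / ℓ s(x, y) := rfl

lemma abs_sub_le_of_grad (hℓ : ∀ e ∈ G.edgeSet, 0 < ℓ e) {v : V → ℝ} {α : ℝ} (hα : 0 ≤ α)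
    (hgrad : ∀ e ∈ G.edgeSet, absGrad ℓ v e ≤ α) {u w : V} (p : G.Walk u w) :
    |v u - v w| ≤ α * walkLen ℓ p := by
  induction p with
  | nil => simp [walkLen_nil]
  | @cons a x b h q ih =>
    have hl : 0 < ℓ s(a, x) := hℓ _ h
    have h1 : |v a - v x| ≤ α * ℓ s(a, x) := by
      have := hgrad s(a, x) h
      rw [absGrad_eval, div_le_iff₀ hl] at this
      linarith
    calc |v a - v b| ≤ |v a - v x| + |v x - v b| := abs_sub_le _ _ _
    _ ≤ α * ℓ s(a, x) + α * walkLen ℓ q := add_le_add h1 ih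
    _ = α * walkLen ℓ (SimpleGraph.Walk.cons h q) := by rw [walkLen_cons]; ring

end main


/-- There is an assignment disagreeing with `v₀` only on `U ⊆ T` and with all edge
gradients at most `α` iff `U` is a vertex cover of the α-pressure terminal graph. -/
theorem outlier_removal_iff_vertex_cover {V : Type*} [Fintype V]
    (G : SimpleGraph V) (hG : G.Connected)
    (ℓ : Sym2 V → ℝ) (hℓ : ∀ e ∈ G.edgeSet, 0 < ℓ e)
    (T : Set V) (hT : T.Nonempty) (v₀ : V → ℝ) (α : ℝ) (hα : 0 ≤ α)
    (U : Set V) (hU : U ⊆ T) :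
    (∃ v : V → ℝ, (∀ t ∈ T, v t ≠ v₀ t → t ∈ U) ∧
        ∀ e ∈ G.edgeSet, absGrad ℓ v e ≤ α) ↔
      ∀ s t : V, s ∈ T → t ∈ T → α < (v₀ s - v₀ t) / gdist G ℓ s t →
        s ∈ U ∨ t ∈ U := by
  classical
  constructor
  · rintro ⟨v, hv, hgrad⟩ s t hs ht hlt
    by_contra hcon
    push_neg at hcon
    obtain ⟨hsU, htU⟩ := hcon
    have hvs : v s = v₀ s := by by_contra h; exact hsU (hv s hs h)
    have hvt : v t = v₀ t := by by_contra h; exact htU (hv t ht h)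
    rcases eq_or_ne s t with rfl | hne
    · rw [sub_self, zero_div] at hlt; exact absurd hlt (not_lt.mpr hα)
    · have hd : 0 < gdist G ℓ s t := gdist_pos ℓ hℓ hG hne
      have habs : |v s - v t| ≤ α * gdist G ℓ s t := by
        rcases eq_or_lt_of_le hα with rfl | hαpos
        · obtain ⟨p⟩ := hG.preconnected s t
          have := abs_sub_le_of_grad hℓ le_rfl hgrad p
          simpa using this
        · have h1 : |v s - v t| / α ≤ gdist G ℓ s t := by
            obtain ⟨p0⟩ := hG.preconnected s t
            refine le_csInf ⟨_, p0, rfl⟩ ?_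
            rintro x ⟨p, rfl⟩
            rw [div_le_iff₀ hαpos]
            calc |v s - v t| ≤ α * walkLen ℓ p := abs_sub_le_of_grad hℓ hα hgrad p
            _ = walkLen ℓ p * α := mul_comm _ _
          calc |v s - v t| = |v s - v t| / α * α := by field_simp
          _ ≤ gdist G ℓ s t * α := by exact mul_le_mul_of_nonneg_right h1 hα
          _ = α * gdist G ℓ s t := mul_comm _ _
      have hle : (v₀ s - v₀ t) / gdist G ℓ s t ≤ α := by
        rw [div_le_iff₀ hd]
        calc v₀ s - v₀ t = v s - v t := by rw [hvs, hvt]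
        _ ≤ |v s - v t| := le_abs_self _
        _ ≤ α * gdist G ℓ s t := habs
      exact absurd hlt (not_lt.mpr hle)
  · intro hcov
    set S : Set V := T \ U with hSdef
    by_cases hS : S.Nonempty
    · set v : V → ℝ := fun x => sSup ((fun s => v₀ s - α * gdist G ℓ s x) '' S) with hvdef
      have hbdd : ∀ x, BddAbove ((fun s => v₀ s - α * gdist G ℓ s x) '' S) :=
        fun x => ((Set.toFinite S).image _).bddAbove
      have hne : ∀ x, ((fun s => v₀ s - α * gdist G ℓ s x) '' S).Nonempty :=
        fun x => hS.image _
      have hlip : ∀ x y, v x ≤ v y + α * gdist G ℓ x y := by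
        intro x y
        refine csSup_le (hne x) ?_
        rintro _ ⟨s, hsS, rfl⟩
        dsimp only
        have htri : gdist G ℓ s y ≤ gdist G ℓ s x + gdist G ℓ x y :=
          gdist_triangle ℓ hℓ hG s x y
        have h2 : v₀ s - α * gdist G ℓ s y ≤ v y := le_csSup (hbdd y) ⟨s, hsS, rfl⟩
        have h3 : α * gdist G ℓ s y ≤ α * (gdist G ℓ s x + gdist G ℓ x y) :=
          mul_le_mul_of_nonneg_left htri hα
        nlinarith
      have hagree : ∀ t ∈ S, v t = v₀ t := by
        intro t htS
        refine le_antisymm (csSup_le (hne t) ?_) ?_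
        · rintro _ ⟨s, hsS, rfl⟩
          dsimp only
          rcases eq_or_ne s t with rfl | hst
          · rw [gdist_self ℓ hℓ]; simp
          · have hd : 0 < gdist G ℓ s t := gdist_pos ℓ hℓ hG hst
            have hnc : ¬ (α < (v₀ s - v₀ t) / gdist G ℓ s t) := by
              intro h
              rcases hcov s t hsS.1 htS.1 h with h' | h'
              · exact hsS.2 h'
              · exact htS.2 h'
            rw [not_lt, div_le_iff₀ hd] at hnc
            nlinarith
        · have : v₀ t - α * gdist G ℓ t t ≤ v t := le_csSup (hbdd t) ⟨t, htS, rfl⟩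
          rw [gdist_self ℓ hℓ] at this
          linarith
      refine ⟨v, ?_, ?_⟩
      · intro t htT hvt
        by_contra htU
        exact hvt (hagree t ⟨htT, htU⟩)
      · intro e he
        induction e using Sym2.ind with
        | _ x y =>
          have hxy : G.Adj x y := he
          have hl : 0 < ℓ s(x, y) := hℓ _ he
          rw [absGrad_eval, div_le_iff₀ hl]
          have h1 : v x ≤ v y + α * gdist G ℓ x y := hlip x y
          have h2 : v y ≤ v x + α * gdist G ℓ y x := hlip y x
          rw [gdist_comm ℓ hℓ hG y x] at h2
          have h3 : gdist G ℓ x y ≤ ℓ s(x, y) := gdist_le_edge ℓ hℓ hxy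
          rw [abs_sub_le_iff]
          constructor <;> nlinarith [gdist_nonneg ℓ hℓ x y]
    · refine ⟨fun _ => 0, ?_, ?_⟩
      · intro t htT _
        by_contra htU
        exact hS ⟨t, htT, htU⟩
      · intro e he
        induction e using Sym2.ind with
        | _ x y =>
          rw [absGrad_eval]
          simp [hα]
end

section
/- Let (G, v₀) be a well-posed instance on a finite connected weighted undirected graph. Then there exists a unique extension v of v₀ to all vertices such that for every other extension v′ ≠ v, the sorted-decreasing vector of absolute edge gradients of v is strictly lexicographically smaller than that of v′ (existence and uniqueness of the lex-minimizer). -/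
/-!
The sum of the `k` largest absolute gradients is the maximum, over `k`-sets of edges, of the sum
of the gradients on the set; it is therefore continuous and convex in `v`. Taking partial sums is
strictly monotone for the lexicographic order, so sorted gradient vectors compare exactly as their
vectors of partial sums do.

Existence: fixing a terminal value and bounding the largest gradient confines `v` to a compact set
(every vertex is joined to the terminal by a walk), and minimising the partial sums one after the
other on it yields a lexicographic minimiser.

Uniqueness: if another extension has the same sorted gradient vector, the midpoint of the two is
no worse, so all three have the same multiset of gradients. Equality in the convexity of the
square then forces equal signed differences across every edge, and connectedness together with
the common terminal value gives equality.
-/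

namespace List

variable {α : Type*}

theorem scanl_eq_cons_scanl_tail {β : Type*} (f : β → α → β) (b : β) (L : List α) :
    L.scanl f b = b :: (L.scanl f b).tail :=
  eq_cons_of_mem_head? head?_scanl

theorem strictMono_scanl_add [AddCommMonoid α] [LinearOrder α] [IsOrderedCancelAddMonoid α]
    (c : α) : StrictMono fun L : List α => L.scanl (· + ·) c := by
  intro L M h
  change Lex (· < ·) L M at h
  dsimp only
  induction h generalizing c with
  | nil =>
    rw [scanl_nil, scanl_cons, scanl_eq_cons_scanl_tail]
    exact .cons .nil
  | @rel a L b M h =>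
    rw [scanl_cons, scanl_cons, scanl_eq_cons_scanl_tail _ (c + a) L,
      scanl_eq_cons_scanl_tail _ (c + b) M]
    exact .cons (.rel ((add_lt_add_iff_left c).2 h))
  | cons h ih =>
    rw [scanl_cons, scanl_cons]
    exact .cons (ih _)

theorem strictMono_partialSums [AddCommMonoid α] [LinearOrder α] [IsOrderedCancelAddMonoid α] :
    StrictMono (partialSums : List α → List α) :=
  strictMono_scanl_add 0

theorem map_apply_le_map_apply [LinearOrder α] {X : Type*} (fs : List (X → α)) {x y : X}
    (h : ∀ f ∈ fs, f x ≤ f y) : fs.map (· x) ≤ fs.map (· y) := by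
  induction fs with
  | nil => exact le_rfl
  | cons f fs ih =>
    rw [← not_lt]
    change ¬ Lex _ _ _
    rw [map_cons, map_cons, cons_lex_cons_iff]
    rintro (hlt | ⟨-, hlt⟩)
    · exact (h f mem_cons_self).not_gt hlt
    · exact (ih fun g hg => h g (mem_cons_of_mem f hg)).not_gt hlt

end List

theorem IsCompact.exists_isMinOn_lex {X α : Type*} [TopologicalSpace X] [LinearOrder α]
    [TopologicalSpace α] [OrderClosedTopology α] {K : Set X} (hK : IsCompact K)
    (hne : K.Nonempty) (fs : List (X → α)) (hfs : ∀ f ∈ fs, Continuous f) :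
    ∃ x ∈ K, IsMinOn (fun y => fs.map (· y)) K x := by
  induction fs generalizing K with
  | nil => exact ⟨hne.some, hne.some_mem, isMinOn_iff.2 fun _ _ => le_rfl⟩
  | cons f fs ih =>
    have hf := hfs f List.mem_cons_self
    obtain ⟨x₀, hx₀, hmin⟩ := hK.exists_isMinOn hne hf.continuousOn
    obtain ⟨x, ⟨hxK, hxf⟩, hx⟩ := ih (hK.inter_right (isClosed_le hf continuous_const))
      ⟨x₀, hx₀, le_rfl⟩ fun g hg => hfs g (List.mem_cons_of_mem f hg)
    refine ⟨x, hxK, isMinOn_iff.2 fun y hy => ?_⟩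
    rw [← not_lt]
    change ¬ List.Lex _ _ _
    rw [List.map_cons, List.map_cons, List.cons_lex_cons_iff]
    have hxy : f x ≤ f y := hxf.trans (hmin hy)
    rintro (hlt | ⟨heq, hlt⟩)
    · exact hxy.not_gt hlt
    · exact (isMinOn_iff.1 hx y ⟨hy, heq.trans_le hxf⟩).not_gt hlt

theorem List.Sublist.sum_le_sum_take {α : Type*} [AddCommMonoid α] [PartialOrder α]
    [IsOrderedAddMonoid α] {l L : List α} (hs : l.Sublist L) (hL : L.Pairwise (· ≥ ·)) :
    l.sum ≤ (L.take l.length).sum := by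
  induction hs with
  | slnil => simp
  | @cons l L b hs ih =>
    refine (ih hL.of_cons).trans ?_
    cases hn : l.length with
    | zero => simp
    | succ j =>
      have hj : j < L.length := by have := hs.length_le; omega
      rw [take_succ_cons, sum_cons, sum_take_succ _ _ hj, add_comm]
      gcongr
      exact rel_of_pairwise_cons hL (getElem_mem hj)
  | cons_cons b hs ih =>
    rw [length_cons, take_succ_cons, sum_cons, sum_cons]
    exact add_le_add_right (ih hL.of_cons) b

theorem Finset.sum_take_sort_map_eq_sup' {ι α : Type*} [AddCommMonoid α] [LinearOrder α]
    [IsOrderedAddMonoid α] (s : Finset ι) (g : ι → α) {k : ℕ} (hk : k ≤ s.card) :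
    (((s.val.map g).sort (· ≥ ·)).take k).sum =
      (s.powersetCard k).sup' (powersetCard_nonempty.2 hk) fun S => ∑ i ∈ S, g i := by
  classical
  set L := (s.val.map g).sort (· ≥ ·)
  have hL : L.Perm (s.toList.map g) := by
    rw [← Multiset.coe_eq_coe, Multiset.sort_eq, ← Multiset.map_coe, coe_toList]
  apply le_antisymm
  · obtain ⟨l, hl, hlL⟩ := ((List.take_sublist k L).subperm.trans hL.subperm)
    obtain ⟨l', hl's, rfl⟩ := List.sublist_map_iff.1 hlL
    have hnd : l'.Nodup := (nodup_toList s).sublist hl's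
    refine le_of_eq_of_le ?_ (le_sup' (fun S => ∑ i ∈ S, g i) (s := s.powersetCard k)
      (b := l'.toFinset) (mem_powersetCard.2 ⟨fun i hi => ?_, ?_⟩))
    · rw [List.sum_toFinset _ hnd, hl.sum_eq]
    · exact mem_toList.1 (hl's.subset (List.mem_toFinset.1 hi))
    · rw [List.toFinset_card_of_nodup hnd, ← List.length_map (f := g), hl.length_eq,
        List.length_take, Multiset.length_sort, Multiset.card_map, card_val, min_eq_left hk]
  · refine sup'_le _ _ fun S hS => ?_
    obtain ⟨hSs, hSk⟩ := mem_powersetCard.1 hS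
    have hle : ↑(S.toList.map g) ≤ (↑L : Multiset α) := by
      rw [Multiset.sort_eq, ← Multiset.map_coe, coe_toList]
      exact Multiset.map_le_map (val_le_iff.2 hSs)
    obtain ⟨l, hl, hlL⟩ := Multiset.coe_le.1 hle
    have := hlL.sum_le_sum_take (Multiset.pairwise_sort _ _)
    rwa [hl.length_eq, List.length_map, length_toList, hSk, hl.sum_eq, sum_map_toList] at this

theorem eq_of_le_average_of_sum_sq_eq {ι : Type*} {s : Finset ι} {p q r : ι → ℝ}
    (hr : ∀ i ∈ s, 0 ≤ r i) (hle : ∀ i ∈ s, r i ≤ (p i + q i) / 2)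
    (hp : ∑ i ∈ s, p i ^ 2 = ∑ i ∈ s, r i ^ 2) (hq : ∑ i ∈ s, q i ^ 2 = ∑ i ∈ s, r i ^ 2) :
    ∀ i ∈ s, p i = r i ∧ q i = r i := by
  have hsum : ∑ i ∈ s, (((p i + q i) / 2) ^ 2 - r i ^ 2 + ((p i - q i) / 2) ^ 2) = 0 := by
    have : ∀ i, ((p i + q i) / 2) ^ 2 - r i ^ 2 + ((p i - q i) / 2) ^ 2
        = p i ^ 2 / 2 + q i ^ 2 / 2 - r i ^ 2 := fun i => by ring
    simp only [this, Finset.sum_sub_distrib, Finset.sum_add_distrib, ← Finset.sum_div, hp, hq]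
    ring
  intro i hi
  have hnn : ∀ j ∈ s, 0 ≤ ((p j + q j) / 2) ^ 2 - r j ^ 2 + ((p j - q j) / 2) ^ 2 :=
    fun j hj => by nlinarith [hr j hj, hle j hj, sq_nonneg ((p j - q j) / 2)]
  have h0 := (Finset.sum_eq_zero_iff_of_nonneg hnn).1 hsum i hi
  have hri := hr i hi
  have hlei := hle i hi
  have hA : 0 ≤ ((p i + q i) / 2) ^ 2 - r i ^ 2 := by nlinarith
  have hpq : p i = q i := by
    have : ((p i - q i) / 2) ^ 2 = 0 := by linarith [sq_nonneg ((p i - q i) / 2)]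
    linarith [pow_eq_zero_iff two_ne_zero |>.1 this]
  rw [← hpq] at hA hlei ⊢
  have hpr : p i = r i := by nlinarith
  exact ⟨hpr, hpr⟩

theorem SimpleGraph.Reachable.eq_of_forall_adj {V β : Type*} {G : SimpleGraph V} {f : V → β}
    (hf : ∀ x y, G.Adj x y → f x = f y) {u v : V} (h : G.Reachable u v) : f u = f v := by
  obtain ⟨p⟩ := h
  induction p with
  | nil => rfl
  | cons hadj _ ih => exact (hf _ _ hadj).trans ih

section absGrad

variable {V : Type*} {ℓ : Sym2 V → ℝ}

@[simp]
theorem absGrad_mk (v : V → ℝ) (x y : V) : absGrad ℓ v s(x, y) = |v x - v y| / ℓ s(x, y) := rfl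

theorem abs_sub_eq_absGrad_mul (v : V → ℝ) {x y : V} (h : ℓ s(x, y) ≠ 0) :
    |v x - v y| = absGrad ℓ v s(x, y) * ℓ s(x, y) := by
  rw [absGrad_mk, div_mul_cancel₀ _ h]

theorem absGrad_nonneg (v : V → ℝ) {e : Sym2 V} (he : 0 ≤ ℓ e) : 0 ≤ absGrad ℓ v e := by
  induction e using Sym2.inductionOn with
  | hf x y => exact div_nonneg (abs_nonneg _) he

theorem continuous_absGrad (e : Sym2 V) : Continuous fun v : V → ℝ => absGrad ℓ v e := by
  induction e using Sym2.inductionOn with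
  | hf x y => exact ((continuous_apply x).sub (continuous_apply y)).abs.div_const _

theorem absGrad_midpoint_le (a b : V → ℝ) {e : Sym2 V} (he : 0 ≤ ℓ e) :
    absGrad ℓ (fun z => (a z + b z) / 2) e ≤ (absGrad ℓ a e + absGrad ℓ b e) / 2 := by
  induction e using Sym2.inductionOn with
  | hf x y =>
    have hnum : |(a x + b x) / 2 - (a y + b y) / 2| ≤ (|a x - a y| + |b x - b y|) / 2 := by
      rw [show (a x + b x) / 2 - (a y + b y) / 2 = ((a x - a y) + (b x - b y)) / 2 by ring,
        abs_div, abs_two]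
      gcongr
      exact abs_add_le _ _
    calc absGrad ℓ (fun z => (a z + b z) / 2) s(x, y)
        ≤ (|a x - a y| + |b x - b y|) / 2 / ℓ s(x, y) := div_le_div_of_nonneg_right hnum he
      _ = _ := by simp only [absGrad_mk]; ring

theorem sub_eq_sub_of_absGrad_eq {a b : V → ℝ} {x y : V} (hℓ : 0 < ℓ s(x, y))
    (hab : absGrad ℓ a s(x, y) = absGrad ℓ b s(x, y))
    (hmid : absGrad ℓ (fun z => (a z + b z) / 2) s(x, y) = absGrad ℓ a s(x, y)) :
    a x - a y = b x - b y := by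
  simp only [absGrad_mk, div_left_inj' hℓ.ne'] at hab hmid
  rw [show (a x + b x) / 2 - (a y + b y) / 2 = ((a x - a y) + (b x - b y)) / 2 by ring,
    abs_div, abs_two] at hmid
  rcases abs_eq_abs.1 hab with h | h
  · exact h
  · rw [h, neg_add_cancel, abs_zero, zero_div, eq_comm, abs_eq_zero] at hmid
    linarith

end absGrad

section gradList

variable {V : Type*} [Fintype V] [DecidableEq V] {G : SimpleGraph V} [DecidableRel G.Adj]
  {ℓ : Sym2 V → ℝ}

variable (G ℓ) in
noncomputable def topSum (k : ℕ) (v : V → ℝ) : ℝ :=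
  ((gradList G ℓ v).take k).sum

variable (G ℓ) in
noncomputable def topSums : List ((V → ℝ) → ℝ) :=
  (List.range (G.edgeFinset.card + 1)).map (topSum G ℓ)

variable (G ℓ) in
theorem length_gradList (v : V → ℝ) : (gradList G ℓ v).length = G.edgeFinset.card := by
  rw [gradList, Multiset.length_sort, Multiset.card_map, Finset.card_val]

theorem sum_sq_absGrad_eq_of_gradList_eq {a b : V → ℝ} (h : gradList G ℓ a = gradList G ℓ b) :
    ∑ e ∈ G.edgeFinset, absGrad ℓ a e ^ 2 = ∑ e ∈ G.edgeFinset, absGrad ℓ b e ^ 2 := by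
  have := congrArg (fun L : List ℝ => ((L : Multiset ℝ).map (· ^ 2)).sum) h
  simpa only [gradList, Multiset.sort_eq, Multiset.map_map, Function.comp_def,
    Finset.sum_eq_multiset_sum] using this

theorem topSum_eq_sup' (v : V → ℝ) {k : ℕ} (hk : k ≤ G.edgeFinset.card) :
    topSum G ℓ k v = (G.edgeFinset.powersetCard k).sup' (Finset.powersetCard_nonempty.2 hk)
      fun S => ∑ e ∈ S, absGrad ℓ v e :=
  G.edgeFinset.sum_take_sort_map_eq_sup' _ hk

theorem topSum_min_card (k : ℕ) (v : V → ℝ) :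
    topSum G ℓ k v = topSum G ℓ (min k G.edgeFinset.card) v := by
  rw [topSum, topSum, ← length_gradList G ℓ v, ← List.take_eq_take_min]

theorem continuous_topSum (k : ℕ) : Continuous (topSum G ℓ k) := by
  have hk := min_le_right k G.edgeFinset.card
  rw [show topSum G ℓ k = _ from funext fun v => (topSum_min_card k v).trans (topSum_eq_sup' v hk)]
  exact Continuous.finset_sup'_apply _ fun S _ =>
    continuous_finsetSum S fun e _ => continuous_absGrad e

theorem topSum_midpoint_le (hℓ : ∀ e ∈ G.edgeSet, 0 < ℓ e) (k : ℕ) (a b : V → ℝ) :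
    topSum G ℓ k (fun z => (a z + b z) / 2) ≤ (topSum G ℓ k a + topSum G ℓ k b) / 2 := by
  simp only [topSum_min_card k, topSum_eq_sup' _ (min_le_right k _)]
  refine Finset.sup'_le _ _ fun S hS => ?_
  have hSE := (Finset.mem_powersetCard.1 hS).1
  calc ∑ e ∈ S, absGrad ℓ (fun z => (a z + b z) / 2) e
      ≤ ∑ e ∈ S, (absGrad ℓ a e + absGrad ℓ b e) / 2 :=
        Finset.sum_le_sum fun e he =>
          absGrad_midpoint_le a b (hℓ e (SimpleGraph.mem_edgeFinset.1 (hSE he))).le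
    _ = ((∑ e ∈ S, absGrad ℓ a e) + ∑ e ∈ S, absGrad ℓ b e) / 2 := by
        rw [← Finset.sum_add_distrib, Finset.sum_div]
    _ ≤ _ := by gcongr <;> exact Finset.le_sup' (fun S => ∑ e ∈ S, absGrad ℓ _ e) hS

theorem absGrad_le_topSum_one (v : V → ℝ) {e : Sym2 V} (he : e ∈ G.edgeFinset) :
    absGrad ℓ v e ≤ topSum G ℓ 1 v := by
  rw [topSum_eq_sup' v (Finset.card_pos.2 ⟨e, he⟩)]
  refine le_of_eq_of_le ?_ (Finset.le_sup' (fun S => ∑ e ∈ S, absGrad ℓ v e)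
    (Finset.mem_powersetCard.2 ⟨Finset.singleton_subset_iff.2 he, Finset.card_singleton e⟩))
  rw [Finset.sum_singleton]

theorem abs_sub_le_topSum_one_mul_walkLen (hℓ : ∀ e ∈ G.edgeSet, 0 < ℓ e) (v : V → ℝ)
    {x y : V} (p : G.Walk x y) : |v x - v y| ≤ topSum G ℓ 1 v * walkLen ℓ p := by
  induction p with
  | nil => simp [walkLen]
  | @cons a b c hab p ih =>
    have hℓab := hℓ s(a, b) hab
    calc |v a - v c| ≤ |v a - v b| + |v b - v c| := abs_sub_le _ _ _
      _ ≤ topSum G ℓ 1 v * ℓ s(a, b) + topSum G ℓ 1 v * walkLen ℓ p := by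
        rw [abs_sub_eq_absGrad_mul v hℓab.ne']
        gcongr
        exact absGrad_le_topSum_one v (SimpleGraph.mem_edgeFinset.2 hab)
      _ = topSum G ℓ 1 v * walkLen ℓ (p.cons hab) := by simp [walkLen, mul_add]

theorem isCompact_setOf_topSum_one_le (hG : G.Connected) (hℓ : ∀ e ∈ G.edgeSet, 0 < ℓ e)
    (t : V) (a c : ℝ) : IsCompact {v : V → ℝ | v t = a ∧ topSum G ℓ 1 v ≤ c} := by
  let L : V → ℝ := fun x => walkLen ℓ (hG.preconnected t x).some
  have hL : ∀ x, 0 ≤ L x := fun x =>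
    List.sum_nonneg fun _ hd => by
      obtain ⟨d, -, rfl⟩ := List.mem_map.1 hd
      exact (hℓ _ d.edge_mem).le
  refine (isCompact_univ_pi fun x => isCompact_Icc (a := a - c * L x) (b := a + c * L x))
    |>.of_isClosed_subset ?_ fun v ⟨hvt, hvc⟩ x _ => ?_
  · exact (isClosed_eq (continuous_apply t) continuous_const).inter
      (isClosed_le (continuous_topSum 1) continuous_const)
  · have := (abs_sub_le_topSum_one_mul_walkLen hℓ v (hG.preconnected t x).some).trans
      (mul_le_mul_of_nonneg_right hvc (hL x))
    rw [hvt, abs_sub_comm] at this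
    exact ⟨by linarith [neg_abs_le (v x - a)], by linarith [le_abs_self (v x - a)]⟩

theorem partialSums_gradList (v : V → ℝ) :
    (gradList G ℓ v).partialSums = (topSums G ℓ).map (· v) := by
  refine List.ext_getElem (by simp [topSums, length_gradList G ℓ]) fun i _ _ => ?_
  simp [topSums, topSum]

theorem gradList_le_gradList_iff {v w : V → ℝ} :
    gradList G ℓ v ≤ gradList G ℓ w ↔ (topSums G ℓ).map (· v) ≤ (topSums G ℓ).map (· w) := by
  rw [← partialSums_gradList, ← partialSums_gradList, List.strictMono_partialSums.le_iff_le]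

theorem gradList_lt_gradList_of_topSum_one_lt {v w : V → ℝ}
    (h : topSum G ℓ 1 v < topSum G ℓ 1 w) : gradList G ℓ v < gradList G ℓ w := by
  have hlen := (length_gradList G ℓ v).trans (length_gradList G ℓ w).symm
  unfold topSum at h
  rcases hv : gradList G ℓ v with _ | ⟨a, L⟩ <;> rcases hw : gradList G ℓ w with _ | ⟨b, M⟩ <;>
    simp only [hv, hw, List.length_nil, List.length_cons] at h hlen
  · simp at h
  · exact List.Lex.nil
  · omega
  · exact List.Lex.rel (by simpa using h)

theorem exists_isMinOn_gradList (hG : G.Connected) (hℓ : ∀ e ∈ G.edgeSet, 0 < ℓ e)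
    {F : Set (V → ℝ)} (hF : IsClosed F) {v₀ : V → ℝ} (hv₀ : v₀ ∈ F) {t : V}
    (hFt : ∀ v ∈ F, v t = v₀ t) : ∃ x ∈ F, IsMinOn (gradList G ℓ) F x := by
  set K := F ∩ {v | topSum G ℓ 1 v ≤ topSum G ℓ 1 v₀}
  have hK : IsCompact K :=
    (isCompact_setOf_topSum_one_le hG hℓ t (v₀ t) (topSum G ℓ 1 v₀)).of_isClosed_subset
      (hF.inter (isClosed_le (continuous_topSum 1) continuous_const))
      fun v hv => ⟨hFt v hv.1, hv.2⟩
  obtain ⟨x, hxK, hx⟩ := hK.exists_isMinOn_lex ⟨v₀, hv₀, le_refl (topSum G ℓ 1 v₀)⟩ (topSums G ℓ)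
    (by simp [topSums, continuous_topSum])
  refine ⟨x, hxK.1, isMinOn_iff.2 fun w hw => ?_⟩
  by_cases hwK : w ∈ K
  · exact gradList_le_gradList_iff.2 (isMinOn_iff.1 hx w hwK)
  · exact (gradList_lt_gradList_of_topSum_one_lt
      (hxK.2.trans_lt (not_le.1 fun h => hwK ⟨hw, h⟩))).le

theorem gradList_midpoint_le (hℓ : ∀ e ∈ G.edgeSet, 0 < ℓ e) {a b : V → ℝ}
    (hab : gradList G ℓ a = gradList G ℓ b) :
    gradList G ℓ (fun z => (a z + b z) / 2) ≤ gradList G ℓ a := by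
  refine gradList_le_gradList_iff.2 (List.map_apply_le_map_apply _ fun f hf => ?_)
  obtain ⟨k, -, rfl⟩ := List.mem_map.1 hf
  have hk : topSum G ℓ k b = topSum G ℓ k a := by rw [topSum, topSum, hab]
  linarith [topSum_midpoint_le hℓ k a b]

theorem eq_of_gradList_midpoint_eq (hG : G.Connected) (hℓ : ∀ e ∈ G.edgeSet, 0 < ℓ e)
    {a b : V → ℝ} (hab : gradList G ℓ a = gradList G ℓ b)
    (hmid : gradList G ℓ (fun z => (a z + b z) / 2) = gradList G ℓ a) {t : V} (ht : a t = b t) :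
    a = b := by
  have key := eq_of_le_average_of_sum_sq_eq (s := G.edgeFinset)
    (fun e he => absGrad_nonneg _ (hℓ e (SimpleGraph.mem_edgeFinset.1 he)).le)
    (fun e he => absGrad_midpoint_le a b (hℓ e (SimpleGraph.mem_edgeFinset.1 he)).le)
    (sum_sq_absGrad_eq_of_gradList_eq hmid).symm
    (sum_sq_absGrad_eq_of_gradList_eq (hmid.trans hab)).symm
  have hadj : ∀ x y, G.Adj x y → (a - b) x = (a - b) y := fun x y hxy => by
    obtain ⟨ha, hb⟩ := key s(x, y) (SimpleGraph.mem_edgeFinset.2 hxy)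
    have := sub_eq_sub_of_absGrad_eq (hℓ s(x, y) hxy) (ha.trans hb.symm) ha.symm
    simp only [Pi.sub_apply]
    linarith
  funext x
  have := (hG.preconnected x t).eq_of_forall_adj hadj
  simp only [Pi.sub_apply] at this
  linarith

end gradList

/-- Existence and uniqueness of the lex-minimizer: there is a unique extension of
`v₀` whose sorted-decreasing vector of absolute edge gradients is strictly
lexicographically smaller than that of every other extension. -/
theorem lex_min_exists_unique {V : Type*} [Fintype V] [DecidableEq V]
    (G : SimpleGraph V) [DecidableRel G.Adj] (hG : G.Connected)
    (ℓ : Sym2 V → ℝ) (hℓ : ∀ e ∈ G.edgeSet, 0 < ℓ e)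
    (T : Set V) (hT : T.Nonempty) (v₀ : V → ℝ) :
    ∃! v : V → ℝ, (∀ t ∈ T, v t = v₀ t) ∧
      ∀ w : V → ℝ, (∀ t ∈ T, w t = v₀ t) → w ≠ v →
        List.Lex (· < ·) (gradList G ℓ v) (gradList G ℓ w) := by
  obtain ⟨t₀, ht₀⟩ := hT
  set F := {v : V → ℝ | ∀ t ∈ T, v t = v₀ t}
  have hF : IsClosed F := by
    simp only [F, Set.ofPred_forall]
    exact isClosed_biInter fun t _ => isClosed_eq (continuous_apply t) continuous_const
  have hmidF : ∀ a ∈ F, ∀ b ∈ F, (fun z => (a z + b z) / 2) ∈ F := fun a ha b hb s hs => by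
    simp only [ha s hs, hb s hs, add_self_div_two]
  obtain ⟨x, hxF, hx⟩ := exists_isMinOn_gradList hG hℓ hF (fun _ _ => rfl) fun v hv => hv t₀ ht₀
  have hlt : ∀ w ∈ F, w ≠ x → gradList G ℓ x < gradList G ℓ w := fun w hw hne =>
    (isMinOn_iff.1 hx w hw).lt_of_ne fun heq => hne <| Eq.symm <|
      eq_of_gradList_midpoint_eq hG hℓ heq
        (le_antisymm (gradList_midpoint_le hℓ heq) (isMinOn_iff.1 hx _ (hmidF x hxF w hw)))
        ((hxF t₀ ht₀).trans (hw t₀ ht₀).symm)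
  exact ⟨x, ⟨hxF, hlt⟩, fun y ⟨hyF, hy⟩ =>
    by_contra fun hne => lt_asymm (hy x hxF (Ne.symm hne)) (hlt y hyF hne)⟩
end
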